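/- Let G be a finite simple graph and let δ be a k-sparse distribution of G. Then G has a δ-flow f that is edge-bounded by k. -/

import Mathlib

/-!
Induct on `∑ v, δ v`. If `δ ≤ 1` the zero flow works. Otherwise pick `a` with `δ a ≥ 2` and a
bounded flow `g` for `δ - 𝟙_a`; the vertex `a` has to send out one more unit. Call `x → y`
residual when `g x y < k`. If `a` reaches, along residual edges, a vertex `b` with `δ b = 0` and
zero defect, pushing one unit along a path from `a` to `b` gives the flow. Otherwise every vertex
of the set `Z` reachable from `a` has defect `δ v - 1` under `g` and every edge leaving `Z`
carries `k`, so the net outflow of `Z` gives `∑ v ∈ Z, δ v = |Z| + k |B(Z)| + 1`, contradicting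
sparsity.
-/

open Finset

namespace SimpleGraph

variable {V : Type*}

namespace Walk

variable {G : SimpleGraph V} [DecidableEq V] {u v w : V}

def flow (p : G.Walk u v) (x y : V) : ℤ :=
  (p.darts.map Dart.toProd).count (x, y) - (p.darts.map Dart.toProd).count (y, x)

theorem flow_antisymm (p : G.Walk u v) (x y : V) : p.flow x y = -p.flow y x :=
  (neg_sub _ _).symm

theorem flow_cons (h : G.Adj u w) (p : G.Walk w v) (x y : V) :
    (cons h p).flow x y =
      p.flow x y + ((if (u, w) = (x, y) then 1 else 0) - if (u, w) = (y, x) then 1 else 0) := by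
  simp only [flow, darts_cons, List.map_cons, List.count_cons, beq_iff_eq]
  push_cast
  ring

theorem sum_flow [Fintype V] (p : G.Walk u v) (x : V) :
    ∑ y, p.flow x y = (if x = u then 1 else 0) - if x = v then 1 else 0 := by
  induction p with
  | nil => simp [flow]
  | cons h p ih =>
    simp only [flow_cons, Prod.mk.injEq, ite_and, sum_add_distrib, ih, sum_sub_distrib,
      sum_ite_irrel, sum_ite_eq, mem_univ, ↓reduceIte, sum_const_zero]
    grind

theorem flow_eq_zero {p : G.Walk u v} {x y : V} (hxy : ∀ d ∈ p.darts, d.toProd ≠ (x, y))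
    (hyx : ∀ d ∈ p.darts, d.toProd ≠ (y, x)) : p.flow x y = 0 := by
  have h₁ : (p.darts.map Dart.toProd).count (x, y) = 0 :=
    List.count_eq_zero.mpr (by simpa using hxy)
  have h₂ : (p.darts.map Dart.toProd).count (y, x) = 0 :=
    List.count_eq_zero.mpr (by simpa using hyx)
  simp [flow, h₁, h₂]

theorem adj_of_flow_ne_zero {p : G.Walk u v} {x y : V} (h : p.flow x y ≠ 0) : G.Adj x y := by
  by_contra hadj
  refine h (flow_eq_zero (fun d _ hd => hadj ?_) (fun d _ hd => hadj ?_))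
  · obtain ⟨rfl, rfl⟩ := Prod.ext_iff.mp hd
    exact d.adj
  · obtain ⟨rfl, rfl⟩ := Prod.ext_iff.mp hd
    exact d.adj.symm

theorem IsTrail.flow_eq_one {p : G.Walk u v} (hp : p.IsTrail) {d : G.Dart} (hd : d ∈ p.darts) :
    p.flow d.fst d.snd = 1 := by
  have hnodup : p.darts.Nodup := hp.edges_nodup.of_map _
  have hsymm : d.symm ∉ p.darts := fun hd' =>
    d.symm_ne (List.inj_on_of_nodup_map hp.edges_nodup hd' hd d.edge_symm)
  have h₁ : (p.darts.map Dart.toProd).count (d.fst, d.snd) = 1 :=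
    List.count_eq_one_of_mem (hnodup.map Dart.toProd_injective) (List.mem_map_of_mem hd)
  have h₂ : (p.darts.map Dart.toProd).count (d.snd, d.fst) = 0 := by
    refine List.count_eq_zero.mpr fun hmem => hsymm ?_
    obtain ⟨d', hd', he⟩ := List.mem_map.mp hmem
    rwa [show d' = d.symm from Dart.toProd_injective he] at hd'
  simp [flow, h₁, h₂]

end Walk

theorem exists_isPath_of_reflTransGen {G : SimpleGraph V} {r : V → V → Prop} {u v : V}
    (h : Relation.ReflTransGen (fun x y => G.Adj x y ∧ r x y) u v) :
    ∃ p : G.Walk u v, p.IsPath ∧ ∀ d ∈ p.darts, r d.fst d.snd := by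
  classical
  have hwalk : ∃ p : G.Walk u v, ∀ d ∈ p.darts, r d.fst d.snd := by
    induction h using Relation.ReflTransGen.head_induction_on with
    | refl => exact ⟨.nil, by simp⟩
    | head hac _ ih =>
      obtain ⟨p, hp⟩ := ih
      exact ⟨.cons hac.1 p, by simpa using ⟨hac.2, hp⟩⟩
  obtain ⟨p, hp⟩ := hwalk
  exact ⟨p.bypass, p.bypass_isPath, fun d hd => hp d (p.darts_bypass_subset_darts hd)⟩

variable (G : SimpleGraph V)

structure IsBoundedFlow (k : ℕ) (f : V → V → ℤ) : Prop where
  antisymm : ∀ u v, f u v = -f v u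
  adj_of_ne_zero : ∀ u v, f u v ≠ 0 → G.Adj u v
  abs_le : ∀ u v, |f u v| ≤ k

theorem isBoundedFlow_zero (k : ℕ) : G.IsBoundedFlow k fun _ _ => 0 :=
  ⟨by simp, by simp, by simp⟩

variable {G}

theorem IsBoundedFlow.add_flow [DecidableEq V] {k : ℕ} {g : V → V → ℤ}
    (hg : G.IsBoundedFlow k g) {u v : V} {p : G.Walk u v} (hp : p.IsTrail)
    (hres : ∀ d ∈ p.darts, g d.fst d.snd < k) :
    G.IsBoundedFlow k fun x y => g x y + p.flow x y where
  antisymm x y := by rw [hg.antisymm x y, p.flow_antisymm x y]; ring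
  adj_of_ne_zero x y hxy := by
    by_cases hp0 : p.flow x y = 0
    · exact hg.adj_of_ne_zero x y (by simpa [hp0] using hxy)
    · exact Walk.adj_of_flow_ne_zero hp0
  abs_le x y := by
    have hgxy := _root_.abs_le.mp (hg.abs_le x y)
    rw [_root_.abs_le]
    by_cases hxy : ∃ d ∈ p.darts, d.toProd = (x, y)
    · obtain ⟨d, hd, hdxy⟩ := hxy
      obtain ⟨rfl, rfl⟩ := Prod.ext_iff.mp hdxy
      have := hres d hd
      rw [hp.flow_eq_one hd]
      omega
    by_cases hyx : ∃ d ∈ p.darts, d.toProd = (y, x)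
    · obtain ⟨d, hd, hdyx⟩ := hyx
      obtain ⟨rfl, rfl⟩ := Prod.ext_iff.mp hdyx
      have := hres d hd
      have := hg.antisymm d.snd d.fst
      rw [p.flow_antisymm, hp.flow_eq_one hd]
      omega
    push Not at hxy hyx
    rw [Walk.flow_eq_zero hxy hyx]
    omega

variable [Fintype V]

def defect (f : V → V → ℤ) (v : V) : ℤ := ∑ u, f v u

def IsDeltaFlow (δ : V → ℕ) (f : V → V → ℤ) : Prop :=
  ∀ v, defect f v = (δ v : ℤ) - 1 ∨ (δ v = 0 ∧ defect f v = 0)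

theorem isDeltaFlow_zero {δ : V → ℕ} (h : ∀ v, δ v ≤ 1) : IsDeltaFlow δ fun _ _ => 0 := by
  intro v
  rcases Nat.le_one_iff_eq_zero_or_eq_one.mp (h v) with hv | hv <;> simp [defect, hv]

variable (G) [DecidableEq V] [DecidableRel G.Adj]

def border (Z : Finset V) : Finset (V × V) :=
  {p | G.Adj p.1 p.2 ∧ p.1 ∉ Z ∧ p.2 ∈ Z}

def IsSparse (k : ℕ) (δ : V → ℕ) : Prop :=
  ∀ Z : Finset V, ∑ v ∈ Z, (δ v : ℤ) ≤ #Z + k * #(G.border Z)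

theorem coe_border (Z : Finset V) :
    (G.border Z : Set (V × V)) = {p | G.Adj p.1 p.2 ∧ p.1 ∉ Z ∧ p.2 ∈ Z} := by
  simp [border]

variable {G}

theorem IsSparse.mono {k : ℕ} {δ δ' : V → ℕ} (h : G.IsSparse k δ) (hle : δ' ≤ δ) :
    G.IsSparse k δ' := fun Z =>
  (sum_le_sum fun v _ => Int.ofNat_le.mpr (hle v)).trans (h Z)

theorem sum_defect_eq_sum_border {f : V → V → ℤ} (hanti : ∀ u v, f u v = -f v u)
    (hadj : ∀ u v, f u v ≠ 0 → G.Adj u v) (Z : Finset V) :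
    ∑ v ∈ Z, defect f v = ∑ p ∈ G.border Z, f p.2 p.1 := by
  have hinner : ∑ v ∈ Z, ∑ u ∈ Z, f v u = 0 := by
    have h : ∑ v ∈ Z, ∑ u ∈ Z, f v u = -∑ v ∈ Z, ∑ u ∈ Z, f v u := by
      conv_lhs => rw [sum_comm]
      rw [← sum_neg_distrib]
      refine sum_congr rfl fun u _ => ?_
      rw [← sum_neg_distrib]
      exact sum_congr rfl fun v _ => hanti v u
    linarith
  calc ∑ v ∈ Z, defect f v
      = ∑ v ∈ Z, ∑ u ∈ Z, f v u + ∑ v ∈ Z, ∑ u ∈ Zᶜ, f v u := by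
        simp only [defect, ← sum_add_distrib, sum_add_sum_compl]
    _ = ∑ q ∈ Z ×ˢ Zᶜ with G.Adj q.1 q.2, f q.1 q.2 := by
        rw [hinner, zero_add, sum_filter_of_ne fun q _ => hadj q.1 q.2, sum_product]
    _ = ∑ p ∈ G.border Z, f p.2 p.1 :=
        sum_equiv (Equiv.prodComm V V) (fun q => by simp [border]; tauto) (fun _ _ => rfl)

theorem exists_reachable_sink {k : ℕ} {δ : V → ℕ} {g : V → V → ℤ} {a : V}
    (hsparse : G.IsSparse k (δ + Pi.single a 1)) (hg : G.IsBoundedFlow k g)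
    (hgδ : IsDeltaFlow δ g) :
    ∃ b, Relation.ReflTransGen (fun x y => G.Adj x y ∧ g x y < k) a b ∧
      δ b = 0 ∧ defect g b = 0 := by
  classical
  by_contra! hnone
  set Z : Finset V := {b | Relation.ReflTransGen (fun x y => G.Adj x y ∧ g x y < k) a b}
  have haZ : a ∈ Z := by simp [Z, Relation.ReflTransGen.refl]
  have hdefect : ∀ v ∈ Z, defect g v = (δ v : ℤ) - 1 := fun v hv =>
    (hgδ v).resolve_right fun h => hnone v (by simpa [Z] using hv) h.1 h.2
  have hsaturated : ∀ p ∈ G.border Z, g p.2 p.1 = k := by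
    intro p hp
    simp only [border, mem_filter, mem_univ, true_and] at hp
    obtain ⟨hadj, hp₁, hp₂⟩ := hp
    have hreach : Relation.ReflTransGen (fun x y => G.Adj x y ∧ g x y < k) a p.2 := by
      simpa [Z] using hp₂
    refine le_antisymm (_root_.abs_le.mp (hg.abs_le p.2 p.1)).2 (not_lt.mp fun hlt => hp₁ ?_)
    simpa [Z] using hreach.tail ⟨hadj.symm, hlt⟩
  have hnet : ∑ v ∈ Z, (δ v : ℤ) = #Z + k * #(G.border Z) := by
    have hcut := G.sum_defect_eq_sum_border hg.antisymm hg.adj_of_ne_zero Z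
    rw [sum_congr rfl hdefect, sum_congr rfl hsaturated, sum_sub_distrib] at hcut
    simp only [sum_const, nsmul_eq_mul, mul_one] at hcut
    linarith
  have hbump : ∑ v ∈ Z, ((δ + Pi.single a 1 : V → ℕ) v : ℤ) = ∑ v ∈ Z, (δ v : ℤ) + 1 := by
    simp [sum_add_distrib, Pi.single_apply, haZ]
  linarith [hsparse Z]

theorem IsDeltaFlow.add_single {δ : V → ℕ} {g f : V → V → ℤ} {a b : V} (hgδ : IsDeltaFlow δ g)
    (ha : 1 ≤ δ a) (hb : δ b = 0) (hgb : defect g b = 0)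
    (hf : ∀ v, defect f v = defect g v + ((if v = a then 1 else 0) - if v = b then 1 else 0)) :
    IsDeltaFlow (δ + Pi.single a 1) f := by
  have hab : a ≠ b := by rintro rfl; omega
  intro v
  rw [hf v]
  by_cases hva : v = a
  · subst hva
    have := (hgδ v).resolve_right (by omega)
    simp [this, hab]
  by_cases hvb : v = b
  · subst hvb
    simp [hb, hgb, hva]
  · simp [hva, hvb, hgδ v]

theorem exists_flow_add_single {k : ℕ} {δ : V → ℕ} {g : V → V → ℤ} {a : V}
    (hsparse : G.IsSparse k (δ + Pi.single a 1)) (ha : 1 ≤ δ a) (hg : G.IsBoundedFlow k g)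
    (hgδ : IsDeltaFlow δ g) :
    ∃ f, G.IsBoundedFlow k f ∧ IsDeltaFlow (δ + Pi.single a 1) f := by
  obtain ⟨b, hab, hb, hgb⟩ := exists_reachable_sink hsparse hg hgδ
  obtain ⟨p, hp, hres⟩ := exists_isPath_of_reflTransGen hab
  refine ⟨_, hg.add_flow hp.isTrail hres, hgδ.add_single ha hb hgb fun v => ?_⟩
  simp only [defect, sum_add_distrib, p.sum_flow]

theorem exists_boundedFlow_of_isSparse {k : ℕ} {δ : V → ℕ} (h : G.IsSparse k δ) :
    ∃ f, G.IsBoundedFlow k f ∧ IsDeltaFlow δ f := by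
  induction hn : ∑ v, δ v using Nat.strong_induction_on generalizing δ with
  | _ n ih =>
  by_cases hle : ∀ v, δ v ≤ 1
  · exact ⟨_, G.isBoundedFlow_zero k, isDeltaFlow_zero hle⟩
  push Not at hle
  obtain ⟨a, ha⟩ := hle
  have hδ : δ - Pi.single a 1 + Pi.single a 1 = δ := by
    funext v
    rcases eq_or_ne v a with rfl | hv
    · simp only [Pi.add_apply, Pi.sub_apply, Pi.single_eq_same]
      omega
    · simp [hv]
  have hsum : ∑ v, (δ - Pi.single a 1 : V → ℕ) v < n := by
    have := congrArg (∑ v, · v) hδ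
    simp only [Pi.add_apply, sum_add_distrib, sum_pi_single', mem_univ, if_true] at this
    omega
  obtain ⟨g, hg, hgδ⟩ := ih _ hsum (h.mono tsub_le_self) rfl
  rw [← hδ] at h ⊢
  exact exists_flow_add_single h (by simp only [Pi.sub_apply, Pi.single_eq_same]; omega) hg hgδ

end SimpleGraph

/-- Every finite simple graph `G` with a `k`-sparse distribution `δ` has a `δ`-flow
that is edge-bounded by `k`. -/
theorem finite_sparse_distribution_has_flow {V : Type*} [Fintype V] (G : SimpleGraph V)
    (k : ℕ) (δ : V → ℕ)
    (hsparse : ∀ Z : Finset V,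
      (∑ v ∈ Z, (δ v : ℕ∞)) ≤ (Z.card : ℕ∞) +
        (k : ℕ∞) * {p : V × V | G.Adj p.1 p.2 ∧ p.1 ∉ Z ∧ p.2 ∈ Z}.encard) :
    ∃ f : V → V → ℤ,
      (∀ u v : V, f u v = -f v u) ∧
      (∀ u v : V, f u v ≠ 0 → G.Adj u v) ∧
      (∀ v : V, {u : V | f v u ≠ 0}.Finite) ∧
      (∀ v : V, (∑ᶠ u : V, f v u) = (δ v : ℤ) - 1 ∨
        (δ v = 0 ∧ (∑ᶠ u : V, f v u) = 0)) ∧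
      ∀ u v : V, |f u v| ≤ (k : ℤ) := by
  classical
  have hsp : G.IsSparse k δ := fun Z => by
    have h := hsparse Z
    rw [← G.coe_border Z, Set.encard_coe_eq_coe_finsetCard] at h
    exact_mod_cast h
  obtain ⟨f, hf, hfδ⟩ := G.exists_boundedFlow_of_isSparse hsp
  refine ⟨f, hf.antisymm, hf.adj_of_ne_zero, fun v => Set.toFinite _, fun v => ?_, hf.abs_le⟩
  simp only [finsum_eq_sum_of_fintype]
  exact hfδ v
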